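/- Let n ≥ 1, let g be a real symmetric positive definite n×n matrix, and let L be a real n×n matrix such that gL is symmetric and such that every real eigenvalue μ of L (i.e., every μ ∈ ℝ for which Lx = μx has a nonzero solution x ∈ ℝⁿ) satisfies |μ| ≤ 1/ρ, where ρ > 0. Then for every ε ∈ [0, ρ) and every t ∈ [−1,1], the matrix G := g (I − εtL)² is symmetric and satisfies the Loewner-order inequalities (1 − ε/ρ)² g ≼ G ≼ (1 + ε/ρ)² g, i.e., G − (1 − ε/ρ)² g and (1 + ε/ρ)² g − G are positive semidefinite. -/

import Mathlib

/-!
Write `g = S²` with `S = √g` self-adjoint and invertible. Symmetry of `gL` says exactly that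
`M = S L S⁻¹` is self-adjoint, and `M` has the spectrum of `L`, so `|sμ| ≤ ε/ρ` on the spectrum of
`M` for `s = εt`. By the functional calculus `(1 - ε/ρ)² ≤ (1 - sM)² ≤ (1 + ε/ρ)²`, and
conjugation by `S`, which preserves the Loewner order, maps `(1 - sM)²` to `g (1 - sL)²` and the
scalars `c` to `c g`.
-/

open Matrix

section StarRing
variable {R : Type*} [Ring R] [StarRing R]

lemma star_units_inv_of_isSelfAdjoint {u : Rˣ} (hu : IsSelfAdjoint (u : R)) :
    star (↑u⁻¹ : R) = ↑u⁻¹ := by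
  rw [← Units.coe_star_inv, show star u = u from Units.ext hu]

lemma isSelfAdjoint_units_conj {u : Rˣ} (hu : IsSelfAdjoint (u : R)) {a : R}
    (ha : IsSelfAdjoint (↑u * ↑u * a)) : IsSelfAdjoint (↑u * a * ↑u⁻¹) := by
  have hcomm : star a * ↑u * ↑u = ↑u * ↑u * a := by
    simpa only [star_mul, hu.star_eq, mul_assoc] using ha.star_eq
  calc star (↑u * a * ↑u⁻¹) = ↑u⁻¹ * (star a * ↑u * ↑u) * ↑u⁻¹ := by
        simp only [star_mul, star_units_inv_of_isSelfAdjoint hu, hu.star_eq, mul_assoc,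
          Units.mul_inv, mul_one]
    _ = ↑u * a * ↑u⁻¹ := by
        rw [hcomm]; simp only [mul_assoc, Units.inv_mul_cancel_left]

end StarRing

lemma units_mul_mul_one_sub_smul_sq {𝕜 R : Type*} [CommRing 𝕜] [Ring R] [Algebra 𝕜 R]
    (u : Rˣ) (a : R) (s : 𝕜) :
    ↑u * ↑u * (1 - s • a) ^ 2 = ↑u * (1 - s • (↑u * a * ↑u⁻¹)) ^ 2 * ↑u := by
  have hconj : 1 - s • (↑u * a * ↑u⁻¹) = ↑u * (1 - s • a) * ↑u⁻¹ := by
    simp only [mul_sub, sub_mul, mul_one, Units.mul_inv, mul_smul_comm, smul_mul_assoc]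
  rw [hconj, Units.conj_pow]
  simp only [mul_assoc, Units.inv_mul, mul_one]

lemma isSelfAdjoint_units_mul_mul_one_sub_smul_sq {R : Type*} [Ring R] [StarRing R]
    [Algebra ℝ R] [StarModule ℝ R] {u : Rˣ} (hu : IsSelfAdjoint (u : R)) {a : R}
    (ha : IsSelfAdjoint (↑u * ↑u * a)) (s : ℝ) :
    IsSelfAdjoint (↑u * ↑u * (1 - s • a) ^ 2) := by
  have hb := isSelfAdjoint_units_conj hu ha
  rw [units_mul_mul_one_sub_smul_sq]
  simpa only [hu.star_eq] using
    ((IsSelfAdjoint.one R).sub ((IsSelfAdjoint.all s).smul hb)).pow 2 |>.conjugate' (u : R)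

section CFC
variable {A : Type*} [TopologicalSpace A] [Ring A] [StarRing A] [Algebra ℝ A]
  [ContinuousFunctionalCalculus ℝ A IsSelfAdjoint]

lemma sq_one_sub_smul_eq_cfc {a : A} (ha : IsSelfAdjoint a) (s : ℝ) :
    (1 - s • a) ^ 2 = cfc (fun x : ℝ => (1 - s * x) ^ 2) a := by
  rw [cfc_pow _ _ a, cfc_sub _ _ a, cfc_const_one ℝ a, cfc_const_mul s _ a, cfc_id' ℝ a]

variable [PartialOrder A] [StarOrderedRing A]

lemma sq_one_sub_smul_le_algebraMap {a : A} (ha : IsSelfAdjoint a) {s δ : ℝ}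
    (h : ∀ μ ∈ spectrum ℝ a, |s * μ| ≤ δ) :
    (1 - s • a) ^ 2 ≤ algebraMap ℝ A ((1 + δ) ^ 2) := by
  rw [sq_one_sub_smul_eq_cfc ha]
  refine cfc_le_algebraMap _ _ a fun μ hμ => ?_
  have := abs_le.mp (h μ hμ)
  nlinarith

lemma algebraMap_le_sq_one_sub_smul {a : A} (ha : IsSelfAdjoint a) {s δ : ℝ} (hδ : δ ≤ 1)
    (h : ∀ μ ∈ spectrum ℝ a, |s * μ| ≤ δ) :
    algebraMap ℝ A ((1 - δ) ^ 2) ≤ (1 - s • a) ^ 2 := by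
  rw [sq_one_sub_smul_eq_cfc ha]
  refine algebraMap_le_cfc _ _ a fun μ hμ => ?_
  have := abs_le.mp (h μ hμ)
  nlinarith

theorem units_mul_mul_one_sub_smul_sq_le {u : Aˣ} (hu : IsSelfAdjoint (u : A)) {a : A}
    (ha : IsSelfAdjoint (↑u * ↑u * a)) {s δ : ℝ} (h : ∀ μ ∈ spectrum ℝ a, |s * μ| ≤ δ) :
    ↑u * ↑u * (1 - s • a) ^ 2 ≤ (1 + δ) ^ 2 • (↑u * ↑u) := by
  have hb := isSelfAdjoint_units_conj hu ha
  have := star_left_conjugate_le_conjugate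
    (sq_one_sub_smul_le_algebraMap hb (by rwa [spectrum.units_conjugate])) (u : A)
  rwa [hu.star_eq, ← units_mul_mul_one_sub_smul_sq, Algebra.algebraMap_eq_smul_one,
    mul_smul_comm, mul_one, smul_mul_assoc] at this

theorem le_units_mul_mul_one_sub_smul_sq {u : Aˣ} (hu : IsSelfAdjoint (u : A)) {a : A}
    (ha : IsSelfAdjoint (↑u * ↑u * a)) {s δ : ℝ} (hδ : δ ≤ 1)
    (h : ∀ μ ∈ spectrum ℝ a, |s * μ| ≤ δ) :
    (1 - δ) ^ 2 • (↑u * ↑u) ≤ ↑u * ↑u * (1 - s • a) ^ 2 := by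
  have hb := isSelfAdjoint_units_conj hu ha
  have := star_left_conjugate_le_conjugate
    (algebraMap_le_sq_one_sub_smul hb hδ (by rwa [spectrum.units_conjugate])) (u : A)
  rwa [hu.star_eq, ← units_mul_mul_one_sub_smul_sq, Algebra.algebraMap_eq_smul_one,
    mul_smul_comm, mul_one, smul_mul_assoc] at this

end CFC

namespace Matrix
variable {n : Type*} [Fintype n] [DecidableEq n]

lemma exists_mulVec_eq_smul_of_mem_spectrum {K : Type*} [Field K] {A : Matrix n n K} {μ : K}
    (h : μ ∈ spectrum K A) : ∃ x ≠ 0, A *ᵥ x = μ • x := by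
  rw [← spectrum_toLin', ← Module.End.hasEigenvalue_iff_mem_spectrum] at h
  obtain ⟨x, hx⟩ := h.exists_hasEigenvector
  exact ⟨x, hx.2, by simpa using hx.apply_eq_smul⟩

open scoped MatrixOrder ComplexOrder in
lemma PosDef.exists_units_isSelfAdjoint_mul_self_eq {𝕜 : Type*} [RCLike 𝕜] {g : Matrix n n 𝕜}
    (hg : g.PosDef) :
    ∃ u : (Matrix n n 𝕜)ˣ, IsSelfAdjoint (u : Matrix n n 𝕜) ∧ (u * u : Matrix n n 𝕜) = g := by
  have hsq : CFC.sqrt g * CFC.sqrt g = g := CFC.sqrt_mul_sqrt_self g hg.posSemidef.nonneg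
  obtain ⟨u, hu⟩ := isUnit_of_mul_isUnit_left (hsq.symm ▸ hg.isUnit :)
  exact ⟨u, hu ▸ IsSelfAdjoint.of_nonneg (CFC.sqrt_nonneg g), hu ▸ hsq⟩

end Matrix

theorem stmt_8_general (n : ℕ) (ρ : ℝ) (hρ : 0 < ρ)
    (g L : Matrix (Fin n) (Fin n) ℝ)
    (hg : g.PosDef) (hgL : (g * L).IsSymm)
    (hL : ∀ (μ : ℝ) (x : Fin n → ℝ), x ≠ 0 → L.mulVec x = μ • x → |μ| ≤ 1 / ρ)
    (ε t : ℝ) (hε : ε ∈ Set.Ico 0 ρ) (ht : t ∈ Set.Icc (-1 : ℝ) 1) :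
    (g * (1 - (ε * t) • L) ^ 2).IsSymm ∧
    (g * (1 - (ε * t) • L) ^ 2 - (1 - ε / ρ) ^ 2 • g).PosSemidef ∧
    ((1 + ε / ρ) ^ 2 • g - g * (1 - (ε * t) • L) ^ 2).PosSemidef := by
  obtain ⟨u, hu, rfl⟩ := hg.exists_units_isSelfAdjoint_mul_self_eq
  have hgL' : IsSelfAdjoint (u * u * L : Matrix (Fin n) (Fin n) ℝ) :=
    isHermitian_iff_isSymm.mpr hgL
  have hspec : ∀ μ ∈ spectrum ℝ L, |ε * t * μ| ≤ ε / ρ := by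
    intro μ hμ
    obtain ⟨x, hx, hLx⟩ := exists_mulVec_eq_smul_of_mem_spectrum hμ
    have ht' : |t| ≤ 1 := abs_le.mpr ht
    rw [abs_mul, abs_mul, abs_of_nonneg hε.1, div_eq_mul_one_div]
    exact mul_le_mul (mul_le_of_le_one_right hε.1 ht') (hL μ x hx hLx) (abs_nonneg _) hε.1
  have hδ : ε / ρ ≤ 1 := (div_le_one hρ).mpr hε.2.le
  open scoped MatrixOrder in
  exact ⟨isHermitian_iff_isSymm.mp (isSelfAdjoint_units_mul_mul_one_sub_smul_sq hu hgL' _),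
    le_units_mul_mul_one_sub_smul_sq hu hgL' hδ hspec,
    units_mul_mul_one_sub_smul_sq_le hu hgL' hspec⟩

theorem stmt_8 (n : ℕ) (hn : 1 ≤ n) (ρ : ℝ) (hρ : 0 < ρ)
    (g L : Matrix (Fin n) (Fin n) ℝ)
    (hg : g.PosDef) (hgL : (g * L).IsSymm)
    (hL : ∀ (μ : ℝ) (x : Fin n → ℝ), x ≠ 0 → L.mulVec x = μ • x → |μ| ≤ 1 / ρ)
    (ε t : ℝ) (hε : ε ∈ Set.Ico 0 ρ) (ht : t ∈ Set.Icc (-1 : ℝ) 1) :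
    (g * (1 - (ε * t) • L) ^ 2).IsSymm ∧
    (g * (1 - (ε * t) • L) ^ 2 - (1 - ε / ρ) ^ 2 • g).PosSemidef ∧
    ((1 + ε / ρ) ^ 2 • g - g * (1 - (ε * t) • L) ^ 2).PosSemidef :=
  stmt_8_general n ρ hρ g L hg hgL hL ε t hε ht
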